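/- Let S be a finite set, H a finite family of subsets of S such that every element of S belongs to at least one member of H, and k a natural number. Build the network G₀ with vertex set {v_h : h ∈ H} ∪ {v_s : s ∈ S}, an edge {v_h, v_s} exactly when s ∈ h, V_src = {v_h : h ∈ H}, V_ld = {v_s : s ∈ S}, and α = |H| + |S|. Then there exists H' ⊆ H with |H'| ≤ k and ⋃H' = S if and only if there exists a defense V_d with |V_d| ≤ k such that p({v_h : h ∈ H}, V_d) = 0 (i.e., the attack destroying all undefended source nodes disconnects no load node). -/

import Mathlib

open scoped Classical

noncomputable section

variable {V : Type*} [Fintype V] [DecidableEq V]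

/-- The number of shortest paths between `s` and `t` in `G` (σ_G(s,t)). -/
def numSP (G : SimpleGraph V) (s t : V) : ℕ :=
  Nat.card {w : G.Walk s t // w.length = G.dist s t}

/-- The number of shortest paths between `s` and `t` in `G` passing through edge `e`
(σ_G(s,t | e)). -/
def numSPthru (G : SimpleGraph V) (s t : V) (e : Sym2 V) : ℕ :=
  Nat.card {w : G.Walk s t // w.length = G.dist s t ∧ e ∈ w.edges}

/-- `N_G(t)`: the vertices of `Vsrc \ {t}` reachable from `t` in `G` at minimum distance
from `t`. -/
def nearestSources (Vsrc : Finset V) (G : SimpleGraph V) (t : V) : Finset V :=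
  ((Vsrc.erase t).filter (fun s => G.Reachable t s)).filter
    (fun s => ∀ s' ∈ (Vsrc.erase t).filter (fun s'' => G.Reachable t s''),
      G.dist t s ≤ G.dist t s')

/-- The load of edge `e` in `G`:
`load_G(e) = Σ_{t ∈ Vld} Σ_{s ∈ N_G(t)} σ_G(s,t|e) / (|N_G(t)|·σ_G(s,t))`. -/
def eload (Vsrc Vld : Finset V) (G : SimpleGraph V) (e : Sym2 V) : ℝ :=
  ∑ t ∈ Vld, ∑ s ∈ nearestSources Vsrc G t,
    (numSPthru G s t e : ℝ) / (((nearestSources Vsrc G t).card : ℝ) * (numSP G s t : ℝ))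

/-- The failure operator: removes every edge whose current load exceeds its capacity
`c_e = (1+α)·load_{G₀}(e)`. -/
def Fop (Vsrc Vld : Finset V) (G0 : SimpleGraph V) (α : ℝ) (G : SimpleGraph V) :
    SimpleGraph V where
  Adj u v := G.Adj u v ∧ eload Vsrc Vld G s(u, v) ≤ (1 + α) * eload Vsrc Vld G0 s(u, v)
  symm := by
    constructor
    intro u v h
    refine ⟨h.1.symm, ?_⟩
    rw [Sym2.eq_swap]
    exact h.2
  loopless := ⟨fun v h => G.loopless.irrefl v h.1⟩

/-- `F*(G)`: the fixed point reached by iterating the failure operator (reached after at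
most `|E|+1 ≤ (card V)^2` applications, since each non-trivial application removes an edge). -/
def Fstar (Vsrc Vld : Finset V) (G0 : SimpleGraph V) (α : ℝ) (G : SimpleGraph V) :
    SimpleGraph V :=
  (Fop Vsrc Vld G0 α)^[Fintype.card V ^ 2] G

/-- `G − S`: the (induced) subgraph obtained by deleting the vertices of `S`. -/
def deleteVerts (G : SimpleGraph V) (S : Finset V) : SimpleGraph V where
  Adj u v := G.Adj u v ∧ u ∉ S ∧ v ∉ S
  symm := ⟨fun u v h => ⟨h.1.symm, h.2.2, h.2.1⟩⟩
  loopless := ⟨fun v h => G.loopless.irrefl v h.1⟩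

/-- `disc(G)`: the number of load nodes from which no source (other than itself) is
reachable in `G`. -/
def disc (Vsrc Vld : Finset V) (G : SimpleGraph V) : ℕ :=
  (Vld.filter (fun t => ∀ s ∈ Vsrc, s ≠ t → ¬ G.Reachable t s)).card

/-- The payoff `p(V_a,V_d) = disc(F*(G₀ − (V_a \ V_d)))`. -/
def payoff (Vsrc Vld : Finset V) (G0 : SimpleGraph V) (α : ℝ) (Va Vd : Finset V) : ℕ :=
  disc Vsrc Vld (Fstar Vsrc Vld G0 α (deleteVerts G0 (Va \ Vd)))

/-- The bipartite network of the set-cover reduction: a source vertex `Sum.inl h` for each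
`h ∈ H`, a load vertex `Sum.inr s` for each `s ∈ S`, with an edge `{v_h, v_s}` exactly when
`s ∈ h`. -/
def coverGraph {S : Type*} [Fintype S] [DecidableEq S] (H : Finset (Finset S)) :
    SimpleGraph (Finset S ⊕ S) :=
  SimpleGraph.fromRel (fun u v => ∃ h ∈ H, ∃ s ∈ h, u = Sum.inl h ∧ v = Sum.inr s)

/-!
Deleting the undefended sources leaves the cover graph of the family `H'` of defended sets. The
cascade only removes edges, so if the defense succeeds, `H'` covers `S`. Conversely, if `H'` covers
`S`, every load node is adjacent to a source, so every shortest source–load path is a single edge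
and the load of an edge `{v_h, v_s}` is `1 / deg v_s`. Removing sources raises this from
`1 / deg_H v_s ≥ 1 / |H|` to at most `1`, which the margin `α = |H| + |S|` absorbs: no edge fails
and the cascade stops at once.
-/

open Finset SimpleGraph

namespace SimpleGraph

omit [Fintype V] [DecidableEq V] in
lemma Adj.eq_toWalk_of_length_eq_dist {G : SimpleGraph V} {a b : V} (h : G.Adj a b)
    (w : G.Walk a b) (hw : w.length = G.dist a b) : w = h.toWalk := by
  rw [dist_eq_one_iff_adj.2 h] at hw
  match w, hw with
  | .cons _ .nil, _ => rfl

end SimpleGraph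

section Network

variable {Vsrc Vld : Finset V} {G G0 : SimpleGraph V}

omit [Fintype V] [DecidableEq V] in
lemma numSP_of_adj {a b : V} (h : G.Adj a b) : numSP G a b = 1 := by
  rw [numSP, Nat.card_eq_one_iff_unique]
  refine ⟨⟨fun w w' => ?_⟩, ⟨⟨h.toWalk, by simp [dist_eq_one_iff_adj.2 h]⟩⟩⟩
  ext1
  rw [h.eq_toWalk_of_length_eq_dist _ w.2, h.eq_toWalk_of_length_eq_dist _ w'.2]

omit [Fintype V] in
lemma numSPthru_of_adj {a b : V} (h : G.Adj a b) (e : Sym2 V) :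
    numSPthru G a b e = if e = s(a, b) then 1 else 0 := by
  split_ifs with he
  · rw [numSPthru, Nat.card_eq_one_iff_unique]
    refine ⟨⟨fun w w' => ?_⟩, ⟨⟨h.toWalk, by simp [dist_eq_one_iff_adj.2 h, he]⟩⟩⟩
    ext1
    rw [h.eq_toWalk_of_length_eq_dist _ w.2.1, h.eq_toWalk_of_length_eq_dist _ w'.2.1]
  · refine Nat.card_eq_zero.2 (Or.inl ⟨fun ⟨w, hw, hmem⟩ => he ?_⟩)
    simpa [h.eq_toWalk_of_length_eq_dist w hw] using hmem

lemma nearestSources_eq_filter_adj {t : V} (hserved : ∃ a ∈ Vsrc, G.Adj t a) :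
    nearestSources Vsrc G t = Vsrc.filter (G.Adj t) := by
  obtain ⟨a, ha, hta⟩ := hserved
  ext x
  simp only [nearestSources, mem_filter, mem_erase]
  constructor
  · rintro ⟨⟨⟨hxt, hx⟩, hreach⟩, hmin⟩
    have hle := hmin a ⟨⟨hta.ne.symm, ha⟩, hta.reachable⟩
    rw [dist_eq_one_iff_adj.2 hta] at hle
    exact ⟨hx, dist_eq_one_iff_adj.1 (le_antisymm hle (hreach.pos_dist_of_ne hxt.symm))⟩
  · rintro ⟨hx, htx⟩
    refine ⟨⟨⟨htx.ne.symm, hx⟩, htx.reachable⟩, fun s ⟨⟨hst, _⟩, hreach⟩ => ?_⟩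
    rw [dist_eq_one_iff_adj.2 htx]
    exact hreach.pos_dist_of_ne hst.symm

lemma eload_of_adj (hdisj : Disjoint Vsrc Vld) (hserved : ∀ t ∈ Vld, ∃ a ∈ Vsrc, G.Adj t a)
    {a t : V} (ha : a ∈ Vsrc) (ht : t ∈ Vld) (hta : G.Adj t a) :
    eload Vsrc Vld G s(a, t) = 1 / #(Vsrc.filter (G.Adj t)) := by
  have hsym : ∀ x ∈ Vsrc, ∀ t' ∈ Vld, s(a, t) = s(x, t') → x = a ∧ t' = t := by
    intro x hx t' ht' he
    rcases Sym2.eq_iff.1 he with ⟨rfl, rfl⟩ | ⟨rfl, -⟩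
    · exact ⟨rfl, rfl⟩
    · exact (disjoint_left.1 hdisj ha ht').elim
  have hthru : ∀ t' ∈ Vld, ∀ x ∈ Vsrc.filter (G.Adj t'), ¬(x = a ∧ t' = t) →
      numSPthru G x t' s(a, t) = 0 := by
    intro t' ht' x hx hne
    rw [numSPthru_of_adj (mem_filter.1 hx).2.symm,
      if_neg fun he => hne (hsym x (mem_filter.1 hx).1 t' ht' he)]
  rw [eload, sum_eq_single_of_mem t ht, nearestSources_eq_filter_adj (hserved t ht),
    sum_eq_single_of_mem a (mem_filter.2 ⟨ha, hta⟩)]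
  · simp [numSP_of_adj hta.symm, numSPthru_of_adj hta.symm]
  · intro x hx hxa
    simp [hthru t ht x hx fun h => hxa h.1]
  · intro t' ht' ht't
    rw [nearestSources_eq_filter_adj (hserved t' ht')]
    refine sum_eq_zero fun x hx => ?_
    simp [hthru t' ht' x hx fun h => ht't h.2]

lemma Fop_le (α : ℝ) (G : SimpleGraph V) : Fop Vsrc Vld G0 α G ≤ G :=
  fun _ _ h => h.1

lemma Fstar_le (α : ℝ) (G : SimpleGraph V) : Fstar Vsrc Vld G0 α G ≤ G := by
  rw [Fstar]
  induction Fintype.card V ^ 2 with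
  | zero => exact le_rfl
  | succ n ih =>
    rw [Function.iterate_succ_apply']
    exact (Fop_le α _).trans ih

lemma Fop_eq_self (hdisj : Disjoint Vsrc Vld) (hle : G ≤ G0)
    (hedge : ∀ e ∈ G.edgeSet, ∃ a ∈ Vsrc, ∃ t ∈ Vld, e = s(a, t))
    (hserved : ∀ t ∈ Vld, ∃ a ∈ Vsrc, G.Adj t a) {α : ℝ} (hα : (#Vsrc : ℝ) ≤ 1 + α) :
    Fop Vsrc Vld G0 α G = G := by
  refine le_antisymm (Fop_le α G) fun u v huv => ⟨huv, ?_⟩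
  obtain ⟨a, ha, t, ht, he⟩ := hedge s(u, v) huv
  have hta : G.Adj t a := (show s(a, t) ∈ G.edgeSet from he ▸ huv).symm
  have hserved0 : ∀ t ∈ Vld, ∃ a ∈ Vsrc, G0.Adj t a := fun t ht =>
    let ⟨a, ha, hta⟩ := hserved t ht; ⟨a, ha, hle hta⟩
  rw [he, eload_of_adj hdisj hserved ha ht hta, eload_of_adj hdisj hserved0 ha ht (hle hta)]
  have hdeg : (1 : ℝ) ≤ #(Vsrc.filter (G.Adj t)) := by
    exact_mod_cast card_pos.2 ⟨a, mem_filter.2 ⟨ha, hta⟩⟩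
  have hdeg0 : (1 : ℝ) ≤ #(Vsrc.filter (G0.Adj t)) := by
    exact_mod_cast card_pos.2 ⟨a, mem_filter.2 ⟨ha, hle hta⟩⟩
  have hdeg0_le : (#(Vsrc.filter (G0.Adj t)) : ℝ) ≤ 1 + α :=
    le_trans (by exact_mod_cast card_filter_le _ _) hα
  calc 1 / (#(Vsrc.filter (G.Adj t)) : ℝ) ≤ 1 := div_le_one_of_le₀ hdeg (by positivity)
    _ ≤ (1 + α) * (1 / #(Vsrc.filter (G0.Adj t))) := by
      rw [mul_one_div, le_div_iff₀ (by positivity), one_mul]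
      exact hdeg0_le

lemma disc_eq_zero_iff :
    disc Vsrc Vld G = 0 ↔ ∀ t ∈ Vld, ∃ s ∈ Vsrc, s ≠ t ∧ G.Reachable t s := by
  simp [disc, filter_eq_empty_iff]

lemma disc_eq_zero_of_le {G' : SimpleGraph V} (hle : G ≤ G') (h : disc Vsrc Vld G = 0) :
    disc Vsrc Vld G' = 0 := by
  rw [disc_eq_zero_iff] at h ⊢
  intro t ht
  obtain ⟨s, hs, hst, hreach⟩ := h t ht
  exact ⟨s, hs, hst, hreach.mono hle⟩

end Network

section CoverGraph

variable {S : Type*} [Fintype S] [DecidableEq S]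

lemma coverGraph_adj_iff {K : Finset (Finset S)} {u v : Finset S ⊕ S} :
    (coverGraph K).Adj u v ↔ ∃ h ∈ K, ∃ s ∈ h, s(u, v) = s(Sum.inl h, Sum.inr s) := by
  rw [coverGraph, SimpleGraph.fromRel_adj]
  constructor
  · rintro ⟨-, ⟨h, hh, s, hs, rfl, rfl⟩ | ⟨h, hh, s, hs, rfl, rfl⟩⟩
    · exact ⟨h, hh, s, hs, rfl⟩
    · exact ⟨h, hh, s, hs, Sym2.eq_swap⟩
  · rintro ⟨h, hh, s, hs, he⟩
    rcases Sym2.eq_iff.1 he with ⟨rfl, rfl⟩ | ⟨rfl, rfl⟩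
    · exact ⟨by simp, Or.inl ⟨h, hh, s, hs, rfl, rfl⟩⟩
    · exact ⟨by simp, Or.inr ⟨h, hh, s, hs, rfl, rfl⟩⟩

lemma coverGraph_adj_inr_inl {K : Finset (Finset S)} {s : S} {h : Finset S} :
    (coverGraph K).Adj (Sum.inr s) (Sum.inl h) ↔ h ∈ K ∧ s ∈ h := by
  simp [coverGraph_adj_iff]

lemma coverGraph_mono {K K' : Finset (Finset S)} (hK : K ⊆ K') : coverGraph K ≤ coverGraph K' :=
  fun _ _ huv =>
    let ⟨h, hh, s, hs, he⟩ := coverGraph_adj_iff.1 huv; coverGraph_adj_iff.2 ⟨h, hK hh, s, hs, he⟩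

lemma deleteVerts_coverGraph (H : Finset (Finset S)) (Vd : Finset (Finset S ⊕ S)) :
    deleteVerts (coverGraph H) (H.image Sum.inl \ Vd) =
      coverGraph (H.filter fun h => Sum.inl h ∈ Vd) := by
  ext u v
  change (coverGraph H).Adj u v ∧ _ ∧ _ ↔ _
  simp only [coverGraph_adj_iff, mem_filter]
  constructor
  · rintro ⟨⟨h, hh, s, hs, he⟩, hu, hv⟩
    refine ⟨h, ⟨hh, by_contra fun hVd => ?_⟩, s, hs, he⟩
    rcases Sym2.eq_iff.1 he with ⟨rfl, -⟩ | ⟨-, rfl⟩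
    · exact hu (mem_sdiff.2 ⟨mem_image_of_mem _ hh, hVd⟩)
    · exact hv (mem_sdiff.2 ⟨mem_image_of_mem _ hh, hVd⟩)
  · rintro ⟨h, ⟨hh, hVd⟩, s, hs, he⟩
    rcases Sym2.eq_iff.1 he with ⟨rfl, rfl⟩ | ⟨rfl, rfl⟩ <;> simp_all

lemma exists_mem_of_coverGraph_reachable_inr {K : Finset (Finset S)} {s : S} {x : Finset S ⊕ S}
    (hreach : (coverGraph K).Reachable (Sum.inr s) x) (hx : x ≠ Sum.inr s) : ∃ h ∈ K, s ∈ h := by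
  obtain ⟨w⟩ := hreach
  cases w with
  | nil => exact (hx rfl).elim
  | cons hadj _ =>
    obtain ⟨h, hh, s', hs', he⟩ := coverGraph_adj_iff.1 hadj
    rcases Sym2.eq_iff.1 he with ⟨he, -⟩ | ⟨he, -⟩
    · simp at he
    · obtain rfl := Sum.inr_injective he
      exact ⟨h, hh, hs'⟩

lemma disc_coverGraph_eq_zero_iff {H K : Finset (Finset S)} (hK : K ⊆ H) :
    disc (H.image Sum.inl) (univ.image Sum.inr) (coverGraph K) = 0 ↔ ∀ s : S, ∃ h ∈ K, s ∈ h := by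
  simp only [disc_eq_zero_iff, mem_image, mem_univ, true_and, forall_exists_index,
    forall_apply_eq_imp_iff]
  refine forall_congr' fun s => ⟨fun ⟨x, hx, hxs, hreach⟩ => ?_, fun ⟨h, hh, hs⟩ => ?_⟩
  · exact exists_mem_of_coverGraph_reachable_inr hreach hxs
  · exact ⟨Sum.inl h, ⟨h, hK hh, rfl⟩, Sum.inl_ne_inr,
      (coverGraph_adj_inr_inl.2 ⟨hh, hs⟩).reachable⟩

lemma Fop_coverGraph_eq_self {H K : Finset (Finset S)} (hK : K ⊆ H)
    (hcover : ∀ s : S, ∃ h ∈ K, s ∈ h) {α : ℝ} (hα : (#H : ℝ) ≤ 1 + α) :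
    Fop (H.image Sum.inl) (univ.image Sum.inr) (coverGraph H) α (coverGraph K) = coverGraph K := by
  refine Fop_eq_self (by simp [Finset.disjoint_left]) (coverGraph_mono hK) ?_ ?_
    (le_trans (by exact_mod_cast card_image_le) hα)
  · rintro ⟨u, v⟩ huv
    obtain ⟨h, hh, s, hs, he⟩ := coverGraph_adj_iff.1 huv
    exact ⟨Sum.inl h, mem_image_of_mem _ (hK hh), Sum.inr s, by simp, he⟩
  · simp only [mem_image, mem_univ, true_and, forall_exists_index, forall_apply_eq_imp_iff]
    intro s
    obtain ⟨h, hh, hs⟩ := hcover s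
    exact ⟨Sum.inl h, ⟨h, hK hh, rfl⟩, coverGraph_adj_inr_inl.2 ⟨hh, hs⟩⟩

end CoverGraph

theorem set_cover_iff_defense_against_full_source_attack_general {S : Type*} [Fintype S]
    [DecidableEq S] (H : Finset (Finset S)) (k : ℕ) :
    (∃ H' ⊆ H, H'.card ≤ k ∧ ∀ s : S, ∃ h ∈ H', s ∈ h) ↔
      (∃ Vd : Finset (Finset S ⊕ S), Vd.card ≤ k ∧
        payoff (H.image Sum.inl) (Finset.univ.image Sum.inr) (coverGraph H)
          ((H.card : ℝ) + (Fintype.card S : ℝ)) (H.image Sum.inl) Vd = 0) := by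
  constructor
  · rintro ⟨H', hH', hcard, hcover⟩
    refine ⟨H'.image Sum.inl, card_image_le.trans hcard, ?_⟩
    have hdefended : (H.filter fun h => Sum.inl h ∈ H'.image (Sum.inl (β := S))) = H' := by
      simp [hH']
    have hstable := Fop_coverGraph_eq_self hH' hcover
      (α := (H.card : ℝ) + Fintype.card S) (by linarith [(Fintype.card S).cast_nonneg (α := ℝ)])
    rw [payoff, deleteVerts_coverGraph, hdefended, Fstar, Function.iterate_fixed hstable,
      disc_coverGraph_eq_zero_iff hH']
    exact hcover
  · rintro ⟨Vd, hcard, hp⟩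
    refine ⟨H.filter fun h => Sum.inl h ∈ Vd, filter_subset _ _, ?_, ?_⟩
    · exact (card_le_card_of_injOn (Sum.inl : Finset S → Finset S ⊕ S)
        (fun h hh => (mem_filter.1 hh).2) Sum.inl_injective.injOn).trans hcard
    · rw [payoff, deleteVerts_coverGraph] at hp
      exact (disc_coverGraph_eq_zero_iff (filter_subset _ _)).1
        (disc_eq_zero_of_le (Fstar_le _ _) hp)

/-- Correctness of the set-cover reduction for the defender's deterministic best response:
with `V_src = {v_h : h ∈ H}`, `V_ld = {v_s : s ∈ S}` and `α = |H| + |S|`, there is a cover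
`H' ⊆ H` of `S` with `|H'| ≤ k` iff there is a defense `V_d` with `|V_d| ≤ k` against which
the attack destroying all source nodes yields payoff `0`. -/
theorem set_cover_iff_defense_against_full_source_attack {S : Type*} [Fintype S]
    [DecidableEq S] (H : Finset (Finset S)) (hcov : ∀ s : S, ∃ h ∈ H, s ∈ h) (k : ℕ) :
    (∃ H' ⊆ H, H'.card ≤ k ∧ ∀ s : S, ∃ h ∈ H', s ∈ h) ↔
      (∃ Vd : Finset (Finset S ⊕ S), Vd.card ≤ k ∧
        payoff (H.image Sum.inl) (Finset.univ.image Sum.inr) (coverGraph H)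
          ((H.card : ℝ) + (Fintype.card S : ℝ)) (H.image Sum.inl) Vd = 0) :=
  set_cover_iff_defense_against_full_source_attack_general H k

end
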